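/- Fix N ∈ ℕ, α > 0, r > 0, ν > 0, and T > 0. Suppose u ∈ C¹([0,T]; E_N) satisfies, for all t ∈ [0,T], the Galerkin fractional Navier–Stokes–Voigt system (I + α^{2r} A^r) u'(t) + ν A u(t) = − P_N P_σ((u(t)·∇)u(t)), where A = A¹. Then for all t ∈ [0,T], ‖u(t)‖_{L²}² + α^{2r} ‖A^{r/2} u(t)‖_{L²}² + 2ν ∫₀ᵗ ‖A^{1/2} u(s)‖_{L²}² ds = ‖u(0)‖_{L²}² + α^{2r} ‖A^{r/2} u(0)‖_{L²}². -/

import Mathlib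

noncomputable section

/-- Fourier coefficient families for trigonometric polynomials on `T³ = ℝ³/ℤ³`:
`c k ∈ ℂ³` is the coefficient of `e^{2πi k·x}`. -/
abbrev Coeffs := (Fin 3 → ℤ) → Fin 3 → ℂ

/-- `|k|² = ∑ i, kᵢ²`. -/
def ksq (k : Fin 3 → ℤ) : ℤ := ∑ i, (k i) ^ 2

/-- The eigenvalue `|2πk|²` of `A` at wavenumber `k`. -/
def mu (k : Fin 3 → ℤ) : ℝ := (2 * Real.pi) ^ 2 * (ksq k : ℝ)

/-- Membership in the Galerkin space `E_N`: real-valued (conjugate symmetric),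
divergence-free (`k·ĉ_k = 0`), mean-free and supported on `0 < |k| ≤ N`. -/
def memEN (N : ℕ) (c : Coeffs) : Prop :=
  (∀ k j, c (-k) j = starRingEnd ℂ (c k j)) ∧
  (∀ k, ∑ i, (k i : ℂ) * c k i = 0) ∧
  (∀ k, (k = 0 ∨ ((N : ℤ) ^ 2 < ksq k)) → c k = 0)

/-- The lattice box `{k : |kᵢ| ≤ N for each i}`, containing all active modes. -/
def box (N : ℕ) : Finset (Fin 3 → ℤ) :=
  Finset.Icc (fun _ => -(N : ℤ)) (fun _ => (N : ℤ))

/-- The `k`-th Fourier coefficient of the nonlinearity `(u·∇)u` for `u ∈ E_N` with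
coefficients `c`:  `∑_{m+n=k} (2πi ∑ᵢ (c m)ᵢ nᵢ) (c n)ⱼ`. -/
def nonlinCoeff (N : ℕ) (c : Coeffs) (k : Fin 3 → ℤ) : Fin 3 → ℂ :=
  fun j => ∑ n ∈ box N, (2 * Real.pi * Complex.I * ∑ i, c (k - n) i * (n i : ℂ)) * c n j

/-- Orthogonal projection of `v ∈ ℂ³` onto the plane orthogonal to `k`. -/
def projPerp (k : Fin 3 → ℤ) (v : Fin 3 → ℂ) : Fin 3 → ℂ :=
  fun j => v j - ((∑ i, (k i : ℂ) * v i) / (ksq k : ℂ)) * (k j : ℂ)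

/-- The coefficients of `P_N P_σ((u·∇)u)` for `u ∈ E_N` with coefficients `c`. -/
def BN (N : ℕ) (c : Coeffs) (k : Fin 3 → ℤ) : Fin 3 → ℂ :=
  if k ≠ 0 ∧ ksq k ≤ (N : ℤ) ^ 2 then projPerp k (nonlinCoeff N c k) else 0

/-- `‖u‖_{L²}² = ∑_{0<|k|≤N} |ĉ_k|²` (Parseval). -/
def l2sq (N : ℕ) (c : Coeffs) : ℝ :=
  ∑ k ∈ box N, ∑ j, Complex.normSq (c k j)

/-- `‖A^{r/2}u‖_{L²}² = ∑_{0<|k|≤N} |2πk|^{2r} |ĉ_k|²`. -/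
def arsq (N : ℕ) (r : ℝ) (c : Coeffs) : ℝ :=
  ∑ k ∈ box N, mu k ^ r * ∑ j, Complex.normSq (c k j)

end

/-! Pairing the equation at mode `k` with `conj (ĉ_k)` and summing gives
`d/dt (‖u‖² + α^{2r}‖A^{r/2}u‖²) = -2ν‖A^{1/2}u‖² - 2 Re ⟨P_N P_σ((u·∇)u), u⟩`, and the last
term vanishes: the projection onto `k^⊥` is invisible against the divergence-free `u`, and in the
convolution sum for `⟨(u·∇)u, u⟩` the involution `(k, n) ↦ (-n, -k)` flips the sign of every term,
by reality and incompressibility of `u`. Integrating in time gives the identity. -/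

open ComplexConjugate

lemma neg_mem_box {N : ℕ} {k : Fin 3 → ℤ} (h : k ∈ box N) : -k ∈ box N := by
  simp only [box, Finset.mem_Icc, Pi.le_def] at h ⊢
  exact ⟨fun i => by simpa using neg_le_neg (h.2 i), fun i => by simpa using neg_le_neg (h.1 i)⟩

lemma sum_conj_mul_nonlinCoeff_eq_sum_product (N : ℕ) (c : Coeffs) :
    ∑ k ∈ box N, ∑ j, conj (c k j) * nonlinCoeff N c k j
      = ∑ p ∈ box N ×ˢ box N, (2 * Real.pi * Complex.I * ∑ i, c (p.1 - p.2) i * (p.2 i : ℂ))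
          * ∑ j, conj (c p.1 j) * c p.2 j := by
  rw [Finset.sum_product]
  refine Finset.sum_congr rfl fun k _ => ?_
  simp only [nonlinCoeff, Finset.mul_sum]
  rw [Finset.sum_comm]
  exact Finset.sum_congr rfl fun n _ => Finset.sum_congr rfl fun j _ => by ring

lemma sum_conj_mul_nonlinCoeff_eq_zero (N : ℕ) (c : Coeffs)
    (hsymm : ∀ k j, c (-k) j = conj (c k j)) (hdiv : ∀ k, ∑ i, (k i : ℂ) * c k i = 0) :
    ∑ k ∈ box N, ∑ j, conj (c k j) * nonlinCoeff N c k j = 0 := by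
  set g : (Fin 3 → ℤ) × (Fin 3 → ℤ) → ℂ := fun p =>
    (2 * Real.pi * Complex.I * ∑ i, c (p.1 - p.2) i * (p.2 i : ℂ)) * ∑ j, conj (c p.1 j) * c p.2 j
  have hanti : ∀ k n, g (-n, -k) = -g (k, n) := by
    intro k n
    have hgram : ∑ j, conj (c (-n) j) * c (-k) j = ∑ j, conj (c k j) * c n j :=
      Finset.sum_congr rfl fun j _ => by rw [hsymm, hsymm, Complex.conj_conj, mul_comm]
    have hadv : ∑ i, c (k - n) i * ((-k) i : ℂ) = -∑ i, c (k - n) i * (n i : ℂ) :=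
      calc ∑ i, c (k - n) i * ((-k) i : ℂ)
          = ∑ i, (-(c (k - n) i * (n i : ℂ)) - ((k - n) i : ℂ) * c (k - n) i) :=
            Finset.sum_congr rfl fun i _ => by
              simp only [Pi.neg_apply, Pi.sub_apply, Int.cast_neg, Int.cast_sub]; ring
        _ = -∑ i, c (k - n) i * (n i : ℂ) := by
            rw [Finset.sum_sub_distrib, Finset.sum_neg_distrib, hdiv, sub_zero]
    simp only [g, neg_sub_neg, hgram, hadv]
    ring
  rw [sum_conj_mul_nonlinCoeff_eq_sum_product]
  refine Finset.sum_involution (fun p _ => (-p.2, -p.1)) ?_ ?_ ?_ (by simp)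
  · rintro ⟨k, n⟩ _
    show g (k, n) + g (-n, -k) = 0
    rw [hanti, add_neg_cancel]
  · rintro ⟨k, n⟩ _ hne hfix
    have := hanti k n
    rw [hfix] at this
    exact hne (CharZero.eq_neg_self_iff.mp this)
  · rintro ⟨k, n⟩ h
    rw [Finset.mem_product] at h ⊢
    exact ⟨neg_mem_box h.2, neg_mem_box h.1⟩

lemma sum_conj_mul_projPerp (k : Fin 3 → ℤ) (v w : Fin 3 → ℂ)
    (hw : ∑ i, (k i : ℂ) * w i = 0) :
    ∑ j, conj (w j) * projPerp k v j = ∑ j, conj (w j) * v j := by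
  have hw' : ∑ j, conj (w j) * (k j : ℂ) = 0 := by
    simpa [mul_comm] using congrArg conj hw
  simp only [projPerp, mul_sub, Finset.sum_sub_distrib, mul_left_comm _ (_ / _ : ℂ),
    ← Finset.mul_sum, hw', mul_zero, sub_zero]

lemma sum_conj_mul_BN_eq_zero {N : ℕ} {c : Coeffs} (hc : memEN N c) :
    ∑ k ∈ box N, ∑ j, conj (c k j) * BN N c k j = 0 := by
  obtain ⟨hsymm, hdiv, hsupp⟩ := hc
  rw [← sum_conj_mul_nonlinCoeff_eq_zero N c hsymm hdiv]
  refine Finset.sum_congr rfl fun k _ => ?_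
  by_cases hk : k ≠ 0 ∧ ksq k ≤ (N : ℤ) ^ 2
  · simp only [BN, if_pos hk]
    exact sum_conj_mul_projPerp k _ _ (hdiv k)
  · rw [not_and_or, not_not, not_le] at hk
    simp [hsupp k hk]

lemma l2sq_add_mul_arsq (N : ℕ) (a r : ℝ) (c : Coeffs) :
    l2sq N c + a * arsq N r c = ∑ k ∈ box N, (1 + a * mu k ^ r) * ∑ j, Complex.normSq (c k j) := by
  simp only [l2sq, arsq, Finset.mul_sum, ← Finset.sum_add_distrib]
  exact Finset.sum_congr rfl fun k _ => Finset.sum_congr rfl fun j _ => by ring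

lemma HasDerivWithinAt.complex_normSq {f : ℝ → ℂ} {f' : ℂ} {s : Set ℝ} {t : ℝ}
    (hf : HasDerivWithinAt f f' s t) :
    HasDerivWithinAt (fun x => Complex.normSq (f x)) (2 * (conj (f t) * f').re) s t := by
  simpa [← Complex.normSq_eq_norm_sq, Complex.inner, mul_comm] using hf.norm_sq

lemma HasDerivWithinAt.sum_mul_sum_normSq {ι κ : Type*} [Fintype κ] (s : Finset ι) (w : ι → ℝ)
    {f : ℝ → ι → κ → ℂ} {f' : ι → κ → ℂ} {S : Set ℝ} {t : ℝ}
    (hf : ∀ k j, HasDerivWithinAt (fun x => f x k j) (f' k j) S t) :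
    HasDerivWithinAt (fun x => ∑ k ∈ s, w k * ∑ j, Complex.normSq (f x k j))
      (∑ k ∈ s, w k * ∑ j, 2 * (conj (f t k j) * f' k j).re) S t :=
  HasDerivWithinAt.fun_sum fun k _ =>
    (HasDerivWithinAt.fun_sum fun j _ => (hf k j).complex_normSq).const_mul (w k)

lemma sum_mul_re_conj_mul_eq_neg_dissipation {N : ℕ} {a r ν : ℝ} {c d : Coeffs}
    (hc : memEN N c)
    (heq : ∀ k j, ((1 + a * mu k ^ r : ℝ) : ℂ) * d k j + ((ν * mu k : ℝ) : ℂ) * c k j = -BN N c k j) :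
    ∑ k ∈ box N, (1 + a * mu k ^ r) * ∑ j, 2 * (conj (c k j) * d k j).re
      = -(2 * ν * arsq N 1 c) := by
  have hterm : ∀ k j, (1 + a * mu k ^ r) * (2 * (conj (c k j) * d k j).re)
      = -(2 * ν * (mu k * Complex.normSq (c k j))) - 2 * (conj (c k j) * BN N c k j).re := by
    intro k j
    have h : ((1 + a * mu k ^ r : ℝ) : ℂ) * (conj (c k j) * d k j)
        = -(conj (c k j) * BN N c k j) - ((ν * mu k : ℝ) : ℂ) * (Complex.normSq (c k j) : ℂ) := by
      linear_combination conj (c k j) * heq k j - ((ν * mu k : ℝ) : ℂ) * Complex.mul_conj (c k j)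
    have h' := congrArg Complex.re h
    rw [Complex.re_ofReal_mul, Complex.sub_re, Complex.neg_re, ← Complex.ofReal_mul,
      Complex.ofReal_re] at h'
    linear_combination 2 * h'
  calc ∑ k ∈ box N, (1 + a * mu k ^ r) * ∑ j, 2 * (conj (c k j) * d k j).re
      = ∑ k ∈ box N, ∑ j,
          (-(2 * ν * (mu k * Complex.normSq (c k j))) - 2 * (conj (c k j) * BN N c k j).re) := by
        simp only [Finset.mul_sum, hterm]
    _ = -(2 * ν * arsq N 1 c) - 2 * (∑ k ∈ box N, ∑ j, conj (c k j) * BN N c k j).re := by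
        simp only [arsq, Real.rpow_one, Complex.re_sum, Finset.sum_sub_distrib, Finset.mul_sum,
          Finset.sum_neg_distrib]
    _ = -(2 * ν * arsq N 1 c) := by
        rw [sum_conj_mul_BN_eq_zero hc, Complex.zero_re, mul_zero, sub_zero]

lemma continuousOn_arsq (N : ℕ) (r : ℝ) {c : ℝ → Coeffs} {S : Set ℝ}
    (hc : ∀ k j, ContinuousOn (fun s => c s k j) S) :
    ContinuousOn (fun s => arsq N r (c s)) S := by
  unfold arsq
  fun_prop

theorem integral_eq_sub_of_hasDerivWithinAt_Icc {E : Type*} [NormedAddCommGroup E]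
    [NormedSpace ℝ E] [CompleteSpace E] {f f' : ℝ → E} {a b : ℝ} (hab : a ≤ b)
    (hderiv : ∀ x ∈ Set.Icc a b, HasDerivWithinAt f (f' x) (Set.Icc a b) x)
    (hcont : ContinuousOn f' (Set.Icc a b)) :
    ∫ x in a..b, f' x = f b - f a :=
  intervalIntegral.integral_eq_sub_of_hasDerivAt_of_le hab
    (fun x hx => (hderiv x hx).continuousWithinAt)
    (fun x hx => (hderiv x (Set.Ioo_subset_Icc_self hx)).hasDerivAt (Icc_mem_nhds hx.1 hx.2))
    (hcont.intervalIntegrable_of_Icc hab)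

theorem galerkin_fNSV_energy_identity_general
    (N : ℕ) (α r ν T : ℝ)
    (c d : ℝ → Coeffs)
    (hmem : ∀ t ∈ Set.Icc (0 : ℝ) T, memEN N (c t))
    (hderiv : ∀ t ∈ Set.Icc (0 : ℝ) T, ∀ k j,
      HasDerivWithinAt (fun s => c s k j) (d t k j) (Set.Icc (0 : ℝ) T) t)
    (heq : ∀ t ∈ Set.Icc (0 : ℝ) T, ∀ k j,
      ((1 + α ^ (2 * r) * mu k ^ r : ℝ) : ℂ) * d t k j + ((ν * mu k : ℝ) : ℂ) * c t k j
        = - BN N (c t) k j) :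
    ∀ t ∈ Set.Icc (0 : ℝ) T,
      l2sq N (c t) + α ^ (2 * r) * arsq N r (c t)
          + 2 * ν * ∫ s in (0 : ℝ)..t, arsq N 1 (c s)
        = l2sq N (c 0) + α ^ (2 * r) * arsq N r (c 0) := by
  have henergy : ∀ s ∈ Set.Icc (0 : ℝ) T,
      HasDerivWithinAt (fun s => l2sq N (c s) + α ^ (2 * r) * arsq N r (c s))
        (-(2 * ν * arsq N 1 (c s))) (Set.Icc (0 : ℝ) T) s := by
    intro s hs
    simp only [l2sq_add_mul_arsq]
    rw [← sum_mul_re_conj_mul_eq_neg_dissipation (hmem s hs) (heq s hs)]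
    exact HasDerivWithinAt.sum_mul_sum_normSq _ _ (hderiv s hs)
  have hcont : ContinuousOn (fun s => arsq N 1 (c s)) (Set.Icc (0 : ℝ) T) :=
    continuousOn_arsq N 1 fun k j s hs => (hderiv s hs k j).continuousWithinAt
  rintro t ⟨ht0, htT⟩
  have hsub : Set.Icc 0 t ⊆ Set.Icc 0 T := Set.Icc_subset_Icc_right htT
  have hFTC := integral_eq_sub_of_hasDerivWithinAt_Icc ht0
    (fun s hs => (henergy s (hsub hs)).mono hsub) ((continuousOn_const.mul (hcont.mono hsub)).neg)
  rw [intervalIntegral.integral_neg, intervalIntegral.integral_const_mul] at hFTC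
  linarith

/-- Energy identity for the Galerkin fractional Navier–Stokes–Voigt system:
if `u ∈ C¹([0,T]; E_N)` (represented by its coefficient family `c`, with derivative `d`)
solves `(I + α^{2r}A^r) u' + νAu = -P_N P_σ((u·∇)u)`, then for all `t ∈ [0,T]`,
`‖u(t)‖² + α^{2r}‖A^{r/2}u(t)‖² + 2ν∫₀ᵗ ‖A^{1/2}u(s)‖² ds = ‖u(0)‖² + α^{2r}‖A^{r/2}u(0)‖²`. -/
theorem galerkin_fNSV_energy_identity
    (N : ℕ) (α r ν T : ℝ) (hα : 0 < α) (hr : 0 < r) (hν : 0 < ν) (hT : 0 < T)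
    (c d : ℝ → Coeffs)
    (hmem : ∀ t ∈ Set.Icc (0 : ℝ) T, memEN N (c t))
    (hderiv : ∀ t ∈ Set.Icc (0 : ℝ) T, ∀ k j,
      HasDerivWithinAt (fun s => c s k j) (d t k j) (Set.Icc (0 : ℝ) T) t)
    (hC1 : ∀ k j, ContinuousOn (fun s => d s k j) (Set.Icc (0 : ℝ) T))
    (heq : ∀ t ∈ Set.Icc (0 : ℝ) T, ∀ k j,
      ((1 + α ^ (2 * r) * mu k ^ r : ℝ) : ℂ) * d t k j + ((ν * mu k : ℝ) : ℂ) * c t k j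
        = - BN N (c t) k j) :
    ∀ t ∈ Set.Icc (0 : ℝ) T,
      l2sq N (c t) + α ^ (2 * r) * arsq N r (c t)
          + 2 * ν * ∫ s in (0 : ℝ)..t, arsq N 1 (c s)
        = l2sq N (c 0) + α ^ (2 * r) * arsq N r (c 0) :=
  galerkin_fNSV_energy_identity_general N α r ν T c d hmem hderiv heq
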